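/- Let (X^n, Y^n) be such that X_1,…,X_n are i.i.d. Bernoulli(p) with p ∈ [1/2, 1), Y_k = X_k ⊕ V_k with V_1,…,V_n i.i.d. Bernoulli(α) independent of X^n, α ∈ [0, 1/2), and ᾱ > p. Then there exists ε_L with p ≤ ε_L < ᾱ such that for all ε ∈ [ε_L, ᾱ], h̲_n(ε)^n = 1 − ζ_n(ε) q^n, where q = αp̄ + ᾱp and ζ_n(ε) := (ᾱ^n − ε^n)/((ᾱp)^n − (αp̄)^n). Moreover, for such ε, the 2^n-ary Z-channel Z_n(ζ_n(ε)) achieves this maximum. -/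
import Mathlib


noncomputable section

/-- A row-stochastic matrix (channel) from an `n`-ary input to a `k`-ary output. -/
def IsStoch {n k : ℕ} (F : Fin n → Fin k → ℝ) : Prop :=
  (∀ y z, 0 ≤ F y z) ∧ ∀ y, ∑ z, F y z = 1

/-- A joint pmf on `{1,…,m} × {1,…,n}`. -/
def IsPmf {m n : ℕ} (P : Fin m → Fin n → ℝ) : Prop :=
  (∀ x y, 0 ≤ P x y) ∧ ∑ x, ∑ y, P x y = 1

/-- `P_c(X) = max_x P_X(x)`. -/
def pcX {m n : ℕ} (P : Fin m → Fin n → ℝ) : ℝ := ⨆ x, ∑ y, P x y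

/-- `P_c(Y) = max_y P_Y(y)`. -/
def pcY {m n : ℕ} (P : Fin m → Fin n → ℝ) : ℝ := ⨆ y, ∑ x, P x y

/-- `P_c(X|Y) = Σ_y max_x P_{XY}(x,y)`. -/
def pcXgY {m n : ℕ} (P : Fin m → Fin n → ℝ) : ℝ := ∑ y, ⨆ x, P x y

/-- `𝒫(F) = P_c(X|Z) = Σ_z max_x Σ_y P_{XY}(x,y) F(y,z)` for a filter `F = P_{Z|Y}`
under the Markov chain `X – Y – Z`. -/
def privP {m n k : ℕ} (P : Fin m → Fin n → ℝ) (F : Fin n → Fin k → ℝ) : ℝ :=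
  ∑ z, ⨆ x, ∑ y, P x y * F y z

/-- `𝒰(F) = P_c(Y|Z) = Σ_z max_y P_Y(y) F(y,z)` for a filter `F = P_{Z|Y}`. -/
def privU {m n k : ℕ} (P : Fin m → Fin n → ℝ) (F : Fin n → Fin k → ℝ) : ℝ :=
  ∑ z, ⨆ y, (∑ x, P x y) * F y z

/-- The set `ℱ` of privacy filters: `n × (n+1)` row-stochastic matrices. -/
def filtSet (n : ℕ) : Set (Fin n → Fin (n + 1) → ℝ) := {F | IsStoch F}

/-- The privacy-aware guessing function
`h(P_{XY}, ε) = max { 𝒰(F) : F ∈ ℱ, 𝒫(F) ≤ ε }`. -/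
def hFun {m n : ℕ} (P : Fin m → Fin n → ℝ) (ε : ℝ) : ℝ :=
  sSup {u | ∃ F ∈ filtSet n, privP P F ≤ ε ∧ privU P F = u}

open scoped Classical

/-- The scalar joint pmf of `(X, Y)` where `X ∼ Bernoulli(p)` (i.e. `P(X=1) = p`) and
`Y = X ⊕ V` with `V ∼ Bernoulli(α)` independent of `X` (a BSC(α)). -/
def pXY (p α : ℝ) : Fin 2 → Fin 2 → ℝ := fun x y =>
  (if x = 1 then p else 1 - p) * (if y = x then 1 - α else α)

/-- The i.i.d. joint pmf of `(X^n, Y^n)`: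
`P_{X^nY^n}(x,y) = Π_k P_{XY}(x_k, y_k)`. -/
def pXYn (n : ℕ) (p α : ℝ) : (Fin n → Fin 2) → (Fin n → Fin 2) → ℝ := fun x y =>
  ∏ k, pXY p α (x k) (y k)

/-- A channel on binary `n`-vectors (row-stochastic, not necessarily memoryless). -/
def IsChan (n : ℕ) (Q : (Fin n → Fin 2) → (Fin n → Fin 2) → ℝ) : Prop :=
  (∀ y z, 0 ≤ Q y z) ∧ ∀ y, ∑ z, Q y z = 1

/-- `P_c(X^n | Z^n)` when `Z^n` is generated from `Y^n` via the channel `Q`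
(Markov chain `X^n – Y^n – Z^n`). -/
def pcXZn (n : ℕ) (p α : ℝ) (Q : (Fin n → Fin 2) → (Fin n → Fin 2) → ℝ) : ℝ :=
  ∑ z, ⨆ x, ∑ y, pXYn n p α x y * Q y z

/-- `P_c(Y^n | Z^n)` when `Z^n` is generated from `Y^n` via the channel `Q`. -/
def pcYZn (n : ℕ) (p α : ℝ) (Q : (Fin n → Fin 2) → (Fin n → Fin 2) → ℝ) : ℝ :=
  ∑ z, ⨆ y, (∑ x, pXYn n p α x y) * Q y z

/-- `h̲_n(ε) = max P_c(Y^n|Z^n)^{1/n}` over all channels `P_{Z^n|Y^n}` with binary output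
vectors forming the Markov chain `X^n – Y^n – Z^n` and with `P_c(X^n|Z^n) ≤ ε^n`. -/
def hLow (n : ℕ) (p α : ℝ) (ε : ℝ) : ℝ :=
  sSup {u : ℝ | ∃ Q, IsChan n Q ∧ pcXZn n p α Q ≤ ε ^ n ∧
    u = pcYZn n p α Q ^ ((n : ℝ)⁻¹)}

/-- The memoryless channel on binary `n`-vectors obtained by applying a single
binary-input binary-output channel `W` coordinatewise. -/
def memoryless (n : ℕ) (W : Fin 2 → Fin 2 → ℝ) :
    (Fin n → Fin 2) → (Fin n → Fin 2) → ℝ := fun y z => ∏ k, W (y k) (z k)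

/-- `h_n^i(ε) = max P_c(Y^n|Z^n)^{1/n}` over all memoryless binary privacy filters
(a single BIBO channel applied coordinatewise) with `P_c(X^n|Z^n) ≤ ε^n`. -/
def hIid (n : ℕ) (p α : ℝ) (ε : ℝ) : ℝ :=
  sSup {u : ℝ | ∃ W : Fin 2 → Fin 2 → ℝ, IsStoch W ∧
    pcXZn n p α (memoryless n W) ≤ ε ^ n ∧
    u = pcYZn n p α (memoryless n W) ^ ((n : ℝ)⁻¹)}

/-- The `2^n`-ary Z-channel `Z_n(γ)` on `{0,1}^n`: `W(a|a) = 1` for `a ≠ 𝟏`,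
`W(𝟎|𝟏) = γ` and `W(𝟏|𝟏) = 1 - γ`. -/
def znChannel (n : ℕ) (γ : ℝ) : (Fin n → Fin 2) → (Fin n → Fin 2) → ℝ := fun a b =>
  if a = (fun _ => 1) then
    (if b = (fun _ => 0) then γ else if b = (fun _ => 1) then 1 - γ else 0)
  else (if b = a then 1 else 0)

namespace HL

variable {n : ℕ} {p α : ℝ}

/-- Bundle of hypotheses. -/
structure Hyp (p α : ℝ) : Prop where
  hp : 1/2 ≤ p
  hp1 : p < 1
  ha0 : 0 ≤ α
  ha : α < 1/2
  hap : p < 1 - α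

namespace Hyp
variable (h : Hyp p α)
include h

lemma p0 : 0 < p := lt_of_lt_of_le (by norm_num) h.hp
lemma pb0 : 0 < 1 - p := by linarith [h.hp1]
lemma ab0 : 0 < 1 - α := by linarith [h.ha]
lemma q0 : 0 < α*(1-p)+(1-α)*p := by nlinarith [h.p0, h.pb0, h.ab0, h.ha0]
lemma q1 : α*(1-p)+(1-α)*p < 1 := by nlinarith [h.p0, h.pb0, h.ab0, h.ha0, h.hp1]
lemma A0 : 0 < (1-α)*p := mul_pos h.ab0 h.p0
lemma B0 : 0 ≤ α*(1-p) := mul_nonneg h.ha0 h.pb0.le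
lemma BA : α*(1-p) < (1-α)*p := by nlinarith [h.hap, h.ha, h.hp]
lemma pa1 : p + α < 1 := by linarith [h.hap]

end Hyp

lemma Delta_pos (h : Hyp p α) (hn : 1 ≤ n) :
    0 < ((1-α)*p)^n - (α*(1-p))^n := by
  have := pow_lt_pow_left₀ h.BA h.B0 (by omega : n ≠ 0)
  linarith

/-! ### scalar `pXY` facts -/

lemma pXY_nonneg (h : Hyp p α) (u v : Fin 2) : 0 ≤ pXY p α u v := by
  fin_cases u <;> fin_cases v <;> simp [pXY] <;> nlinarith [h.p0, h.pb0, h.ab0, h.ha0]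

lemma pXY_le_diag (h : Hyp p α) (u v : Fin 2) : pXY p α u v ≤ pXY p α v v := by
  fin_cases u <;> fin_cases v <;> simp [pXY] <;> nlinarith [h.p0, h.pb0, h.ab0, h.ha0, h.hap, h.hp]

lemma pXY_star (h : Hyp p α) (u v : Fin 2) :
    (α*(1-p)) * pXY p α v v ≤ pXY p α u v * ((1-α)*p) := by
  have h2p : (0:ℝ) ≤ 2*p - 1 := by linarith [h.hp]
  fin_cases u <;> fin_cases v <;> simp [pXY] <;>
    nlinarith [h.p0, h.pb0, h.ab0, h.ha0, h.BA, mul_pos h.pb0 h.ab0,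
      mul_pos h.p0 h.ab0, mul_nonneg (mul_nonneg h.ha0 h.ab0.le) h2p]

lemma rY_star (h : Hyp p α) (v : Fin 2) :
    (α*(1-p)+(1-α)*p) * pXY p α v v ≤ (pXY p α 0 v + pXY p α 1 v) * ((1-α)*p) := by
  have h2p : (0:ℝ) ≤ 2*p - 1 := by linarith [h.hp]
  fin_cases v <;> simp [pXY] <;>
    nlinarith [h.p0, h.pb0, h.ab0, h.ha0, mul_nonneg (mul_nonneg h.ha0 h.ab0.le) h2p]

/-! ### product facts -/

lemma pXYn_nonneg (h : Hyp p α) (x y : Fin n → Fin 2) : 0 ≤ pXYn n p α x y :=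
  Finset.prod_nonneg fun k _ => pXY_nonneg h _ _

lemma pXYn_le_diag (h : Hyp p α) (x y : Fin n → Fin 2) : pXYn n p α x y ≤ pXYn n p α y y :=
  Finset.prod_le_prod (fun k _ => pXY_nonneg h _ _) (fun k _ => pXY_le_diag h _ _)

lemma pXYn_star (h : Hyp p α) (x y : Fin n → Fin 2) :
    (α*(1-p))^n * pXYn n p α y y ≤ pXYn n p α x y * ((1-α)*p)^n := by
  have := Finset.prod_le_prod (s := (Finset.univ : Finset (Fin n)))
    (f := fun k => (α*(1-p)) * pXY p α (y k) (y k))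
    (g := fun k => pXY p α (x k) (y k) * ((1-α)*p))
    (fun k _ => mul_nonneg h.B0 (pXY_nonneg h _ _))
    (fun k _ => pXY_star h _ _)
  simpa [Finset.prod_mul_distrib, pXYn, Finset.card_univ] using this

/-- marginal of `Y`. -/
lemma pY_eq (y : Fin n → Fin 2) :
    (∑ x, pXYn n p α x y) = ∏ k, (pXY p α 0 (y k) + pXY p α 1 (y k)) := by
  rw [show (∏ k, (pXY p α 0 (y k) + pXY p α 1 (y k))) = ∏ k, ∑ v, pXY p α v (y k) by
    simp [Fin.sum_univ_two]]
  rw [Finset.prod_univ_sum, Fintype.piFinset_univ]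
  rfl

lemma pY_nonneg (h : Hyp p α) (y : Fin n → Fin 2) : 0 ≤ ∑ x, pXYn n p α x y :=
  Finset.sum_nonneg fun x _ => pXYn_nonneg h _ _

lemma pY_star (h : Hyp p α) (y : Fin n → Fin 2) :
    (α*(1-p)+(1-α)*p)^n * pXYn n p α y y ≤ (∑ x, pXYn n p α x y) * ((1-α)*p)^n := by
  rw [pY_eq]
  have := Finset.prod_le_prod (s := (Finset.univ : Finset (Fin n)))
    (f := fun k => (α*(1-p)+(1-α)*p) * pXY p α (y k) (y k))
    (g := fun k => (pXY p α 0 (y k) + pXY p α 1 (y k)) * ((1-α)*p))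
    (fun k _ => mul_nonneg h.q0.le (pXY_nonneg h _ _))
    (fun k _ => rY_star h _)
  simpa [Finset.prod_mul_distrib, pXYn, Finset.card_univ] using this

lemma sum_pY : (∑ y : Fin n → Fin 2, ∑ x, pXYn n p α x y) = 1 := by
  have : ∀ y : Fin n → Fin 2, (∑ x, pXYn n p α x y)
      = ∏ k, (pXY p α 0 (y k) + pXY p α 1 (y k)) := fun y => pY_eq y
  rw [Finset.sum_congr rfl fun y _ => this y]
  rw [← Fintype.piFinset_univ,
    ← Finset.prod_univ_sum (t := fun _ => (Finset.univ : Finset (Fin 2)))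
      (f := fun (_ : Fin n) (v : Fin 2) => pXY p α 0 v + pXY p α 1 v)]
  have h1 : (∑ v : Fin 2, (pXY p α 0 v + pXY p α 1 v)) = 1 := by
    simp [Fin.sum_univ_two, pXY]; ring
  simp only [h1, Finset.prod_const_one]

lemma sum_diag : (∑ y : Fin n → Fin 2, pXYn n p α y y) = (1-α)^n := by
  have : ∀ y : Fin n → Fin 2, pXYn n p α y y = ∏ k, (fun v : Fin 2 => pXY p α v v) (y k) := by
    intro y; rfl
  rw [Finset.sum_congr rfl fun y _ => this y]
  rw [← Fintype.piFinset_univ,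
    ← Finset.prod_univ_sum (t := fun _ => (Finset.univ : Finset (Fin 2)))
      (f := fun (_ : Fin n) (v : Fin 2) => pXY p α v v)]
  have h1 : (∑ v : Fin 2, pXY p α v v) = 1 - α := by
    simp [Fin.sum_univ_two, pXY]; ring
  simp only [h1, Finset.prod_const, Finset.card_univ, Fintype.card_fin]

lemma diag_one : pXYn n p α (fun _ => 1) (fun _ => 1) = ((1-α)*p)^n := by
  simp [pXYn, pXY, mul_comm]

lemma diag_zero : pXYn n p α (fun _ => 0) (fun _ => 0) = ((1-p)*(1-α))^n := by
  simp [pXYn, pXY]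

lemma off_zero_one : pXYn n p α (fun _ => 0) (fun _ => 1) = (α*(1-p))^n := by
  simp [pXYn, pXY, mul_comm]

lemma pY_one : (∑ x, pXYn n p α x (fun _ => 1)) = (α*(1-p)+(1-α)*p)^n := by
  rw [pY_eq]; simp [pXY]; congr 1; ring

lemma pY_zero : (∑ x, pXYn n p α x (fun _ => 0)) = (1 - (α*(1-p)+(1-α)*p))^n := by
  rw [pY_eq]; simp [pXY]; congr 1; ring

/-! ### the converse -/

lemma coeff_nonneg (h : Hyp p α) (hn : 1 ≤ n) (x y : Fin n → Fin 2) :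
    0 ≤ ((∑ x', pXYn n p α x' y)
          - (α*(1-p)+(1-α)*p)^n / (((1-α)*p)^n - (α*(1-p))^n) * pXYn n p α y y)
        + (α*(1-p)+(1-α)*p)^n / (((1-α)*p)^n - (α*(1-p))^n) * pXYn n p α x y := by
  have hΔ : 0 < ((1-α)*p)^n - (α*(1-p))^n := Delta_pos h hn
  have hAn : (0:ℝ) < ((1-α)*p)^n := pow_pos h.A0 n
  have hqn : (0:ℝ) ≤ (α*(1-p)+(1-α)*p)^n := pow_nonneg h.q0.le n
  have h1 := pXYn_star h x y
  have h2 := pY_star h y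
  have key : (α*(1-p)+(1-α)*p)^n * (pXYn n p α y y - pXYn n p α x y)
      ≤ (∑ x', pXYn n p α x' y) * (((1-α)*p)^n - (α*(1-p))^n) := by
    have t1 : 0 ≤ (((1-α)*p)^n - (α*(1-p))^n)
        * ((∑ x', pXYn n p α x' y) * ((1-α)*p)^n
            - (α*(1-p)+(1-α)*p)^n * pXYn n p α y y) :=
      mul_nonneg hΔ.le (by linarith)
    have t2 : 0 ≤ (α*(1-p)+(1-α)*p)^n
        * (pXYn n p α x y * ((1-α)*p)^n - (α*(1-p))^n * pXYn n p α y y) :=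
      mul_nonneg hqn (by linarith)
    have t3 : (α*(1-p)+(1-α)*p)^n * (pXYn n p α y y - pXYn n p α x y) * ((1-α)*p)^n
        ≤ (∑ x', pXYn n p α x' y) * (((1-α)*p)^n - (α*(1-p))^n) * ((1-α)*p)^n := by
      nlinarith [t1, t2]
    exact le_of_mul_le_mul_right t3 hAn
  have hdiv : (α*(1-p)+(1-α)*p)^n / (((1-α)*p)^n - (α*(1-p))^n)
      * (pXYn n p α y y - pXYn n p α x y) ≤ ∑ x', pXYn n p α x' y := by
    rw [div_mul_eq_mul_div, div_le_iff₀ hΔ]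
    exact key
  have hexp : (α*(1-p)+(1-α)*p)^n / (((1-α)*p)^n - (α*(1-p))^n)
      * (pXYn n p α y y - pXYn n p α x y)
      = (α*(1-p)+(1-α)*p)^n / (((1-α)*p)^n - (α*(1-p))^n) * pXYn n p α y y
        - (α*(1-p)+(1-α)*p)^n / (((1-α)*p)^n - (α*(1-p))^n) * pXYn n p α x y := by
    ring
  linarith [hexp ▸ hdiv]

lemma converse (h : Hyp p α) (hn : 1 ≤ n) (Q : (Fin n → Fin 2) → (Fin n → Fin 2) → ℝ)
    (hQ : IsChan n Q) :
    pcYZn n p α Q ≤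
      (1 - (α*(1-p)+(1-α)*p)^n / (((1-α)*p)^n - (α*(1-p))^n) * (1-α)^n)
      + (α*(1-p)+(1-α)*p)^n / (((1-α)*p)^n - (α*(1-p))^n) * pcXZn n p α Q := by
  set s : ℝ := (α*(1-p)+(1-α)*p)^n / (((1-α)*p)^n - (α*(1-p))^n) with hs
  have hs0 : 0 ≤ s :=
    div_nonneg (pow_nonneg h.q0.le n) (Delta_pos h hn).le
  have hcol : ∀ z, (⨆ y, (∑ x, pXYn n p α x y) * Q y z)
      ≤ (∑ y, ((∑ x, pXYn n p α x y) - s * pXYn n p α y y) * Q y z)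
        + s * ⨆ x, ∑ y, pXYn n p α x y * Q y z := by
    intro z
    refine ciSup_le fun y0 => ?_
    have hsup : (∑ y, pXYn n p α y0 y * Q y z) ≤ ⨆ x, ∑ y, pXYn n p α x y * Q y z :=
      le_ciSup (f := fun x => ∑ y, pXYn n p α x y * Q y z) (Set.finite_range _).bddAbove y0
    have h0 : ∀ y ∈ (Finset.univ : Finset (Fin n → Fin 2)),
        0 ≤ (((∑ x, pXYn n p α x y) - s * pXYn n p α y y) + s * pXYn n p α y0 y) * Q y z :=
      fun y _ => mul_nonneg (coeff_nonneg h hn y0 y) (hQ.1 y z)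
    have hterm := Finset.single_le_sum h0 (Finset.mem_univ y0)
    have hexp : (((∑ x, pXYn n p α x y0) - s * pXYn n p α y0 y0)
          + s * pXYn n p α y0 y0) * Q y0 z = (∑ x, pXYn n p α x y0) * Q y0 z := by ring
    rw [hexp] at hterm
    have hsplit : (∑ y, (((∑ x, pXYn n p α x y) - s * pXYn n p α y y)
            + s * pXYn n p α y0 y) * Q y z)
        = (∑ y, ((∑ x, pXYn n p α x y) - s * pXYn n p α y y) * Q y z)
          + s * ∑ y, pXYn n p α y0 y * Q y z := by
      rw [Finset.mul_sum, ← Finset.sum_add_distrib]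
      exact Finset.sum_congr rfl fun y _ => by ring
    rw [hsplit] at hterm
    exact hterm.trans (by nlinarith [hsup])
  have hsum : pcYZn n p α Q ≤
      (∑ z, ∑ y, ((∑ x, pXYn n p α x y) - s * pXYn n p α y y) * Q y z)
        + s * pcXZn n p α Q := by
    rw [pcYZn, pcXZn, Finset.mul_sum, ← Finset.sum_add_distrib]
    exact Finset.sum_le_sum fun z _ => hcol z
  have hlam : (∑ z, ∑ y, ((∑ x, pXYn n p α x y) - s * pXYn n p α y y) * Q y z)
      = 1 - s * (1-α)^n := by
    rw [Finset.sum_comm]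
    have : ∀ y : Fin n → Fin 2,
        (∑ z, ((∑ x, pXYn n p α x y) - s * pXYn n p α y y) * Q y z)
        = ((∑ x, pXYn n p α x y) - s * pXYn n p α y y) := by
      intro y; rw [← Finset.mul_sum, hQ.2 y, mul_one]
    rw [Finset.sum_congr rfl fun y _ => this y, Finset.sum_sub_distrib,
      ← Finset.mul_sum, sum_pY, sum_diag]
  linarith [hsum, hlam.ge, hlam.le]

/-! ### the Z-channel computations -/

lemma zero_ne_one' (hn : 1 ≤ n) : (fun _ : Fin n => (0:Fin 2)) ≠ (fun _ : Fin n => (1:Fin 2)) := by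
  intro hEq
  have := congrFun hEq ⟨0, hn⟩
  simp at this

lemma iSup_eq_of_le {ι : Type*} [Fintype ι] [Nonempty ι] (f : ι → ℝ) (i0 : ι)
    (h : ∀ i, f i ≤ f i0) : (⨆ i, f i) = f i0 :=
  le_antisymm (ciSup_le h) (le_ciSup (Set.finite_range f).bddAbove i0)

lemma split_sum (hn : 1 ≤ n) (F : (Fin n → Fin 2) → ℝ) :
    (∑ z, F z) = F (fun _ => 1) + F (fun _ => 0)
      + ∑ z ∈ ((Finset.univ.erase (fun _ => 1)).erase (fun _ => 0)), F z := by
  rw [← Finset.add_sum_erase _ F (Finset.mem_univ (fun _ => (1:Fin 2)))]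
  rw [← Finset.add_sum_erase _ F
    (Finset.mem_erase.2 ⟨zero_ne_one' hn, Finset.mem_univ _⟩)]
  ring

lemma znChannel_isChan (hn : 1 ≤ n) {γ : ℝ} (h0 : 0 ≤ γ) (h1 : γ ≤ 1) :
    IsChan n (znChannel n γ) := by
  constructor
  · intro y z
    rw [znChannel]
    split_ifs <;> linarith
  · intro y
    by_cases hy : y = (fun _ => (1:Fin 2))
    · subst hy
      rw [split_sum hn]
      have hrest : ∀ z ∈ ((Finset.univ.erase (fun _ => (1:Fin 2))).erase (fun _ => 0)),
          znChannel n γ (fun _ => 1) z = 0 := by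
        intro z hz
        have hz0 : z ≠ (fun _ => (0:Fin 2)) := (Finset.mem_erase.1 hz).1
        have hz1 : z ≠ (fun _ => (1:Fin 2)) :=
          (Finset.mem_erase.1 (Finset.mem_erase.1 hz).2).1
        simp [znChannel, hz0, hz1]
      rw [Finset.sum_congr rfl hrest]
      have h10 : (fun _ : Fin n => (1:Fin 2)) ≠ (fun _ : Fin n => 0) := (zero_ne_one' hn).symm
      simp [znChannel, h10]
    · have : ∀ z, znChannel n γ y z = if z = y then 1 else 0 := by
        intro z; simp [znChannel, hy]
      rw [Finset.sum_congr rfl fun z _ => this z]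
      rw [Finset.sum_ite_eq']
      simp

lemma sum_znChannel (γ : ℝ) (f : (Fin n → Fin 2) → ℝ) (z : Fin n → Fin 2) :
    (∑ y, f y * znChannel n γ y z)
      = f (fun _ => 1)
          * (if z = (fun _ => 0) then γ else if z = (fun _ => 1) then 1-γ else 0)
        + (if z = (fun _ => 1) then 0 else f z) := by
  rw [← Finset.add_sum_erase _ (fun y => f y * znChannel n γ y z)
      (Finset.mem_univ (fun _ => (1:Fin 2)))]
  congr 1
  · simp [znChannel]
  · have : ∀ y ∈ Finset.univ.erase (fun _ => (1:Fin 2)),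
        f y * znChannel n γ y z = if z = y then f y else 0 := by
      intro y hy
      have hy1 : y ≠ (fun _ => (1:Fin 2)) := (Finset.mem_erase.1 hy).1
      simp [znChannel, hy1, mul_ite]
    rw [Finset.sum_congr rfl this, Finset.sum_ite_eq]
    by_cases hz : z = (fun _ => (1:Fin 2))
    · simp [hz, Finset.mem_erase]
    · simp [Finset.mem_erase, hz]

lemma off_diag_zero_bound (h : Hyp p α) (hn : 1 ≤ n) {x : Fin n → Fin 2}
    (hx : x ≠ (fun _ => 0)) :
    pXYn n p α x (fun _ => 0) * ((1-p)*(1-α)) ≤ (p*α) * ((1-p)*(1-α))^n := by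
  have hex : ∃ k, x k ≠ 0 := by
    by_contra hcon
    push_neg at hcon
    exact hx (funext hcon)
  obtain ⟨k0, hk0⟩ := hex
  have hx1 : x k0 = 1 := by
    have := (x k0).isLt
    omega
  have hb : pXYn n p α x (fun _ => 0)
      ≤ ∏ k, (if k = k0 then p*α else (1-p)*(1-α)) := by
    refine Finset.prod_le_prod (fun k _ => pXY_nonneg h _ _) (fun k _ => ?_)
    by_cases hk : k = k0
    · subst hk; rw [hx1, if_pos rfl]; simp [pXY]
    · rw [if_neg hk]
      have := pXY_le_diag h (x k) 0
      simpa [pXY] using this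
  have hprod : (∏ k, (if k = k0 then p*α else (1-p)*(1-α)))
      = (p*α) * ((1-p)*(1-α))^(n-1) := by
    rw [← Finset.mul_prod_erase _ _ (Finset.mem_univ k0), if_pos rfl]
    congr 1
    rw [Finset.prod_congr rfl (fun k hk => if_neg (Finset.mem_erase.1 hk).1),
      Finset.prod_const, Finset.card_erase_of_mem (Finset.mem_univ k0),
      Finset.card_univ, Fintype.card_fin]
  have hc : (0:ℝ) < (1-p)*(1-α) := mul_pos h.pb0 h.ab0
  have hpow : ((1-p)*(1-α))^(n-1) * ((1-p)*(1-α)) = ((1-p)*(1-α))^n := by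
    rw [← pow_succ, Nat.sub_add_cancel hn]
  have hpa : (0:ℝ) ≤ p*α := mul_nonneg h.p0.le h.ha0
  calc pXYn n p α x (fun _ => 0) * ((1-p)*(1-α))
      ≤ ((p*α) * ((1-p)*(1-α))^(n-1)) * ((1-p)*(1-α)) := by
        rw [← hprod]
        exact mul_le_mul_of_nonneg_right hb hc.le
    _ = (p*α) * ((1-p)*(1-α))^n := by rw [mul_assoc, hpow]

lemma pXYn_le_An (h : Hyp p α) (x : Fin n → Fin 2) :
    pXYn n p α x (fun _ => 1) ≤ ((1-α)*p)^n :=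
  le_of_le_of_eq (pXYn_le_diag h _ _) diag_one

/-- `P_c(X^n|Z^n)` for the Z-channel. -/
lemma pcXZn_znChannel (h : Hyp p α) (hn : 1 ≤ n) {γ : ℝ} (h0 : 0 ≤ γ) (h1 : γ ≤ 1)
    (hcond : γ * (((1-α)*p)^n - (α*(1-p))^n) * ((1-p)*(1-α))
      ≤ ((1-p)*(1-α) - p*α) * ((1-p)*(1-α))^n) :
    pcXZn n p α (znChannel n γ)
      = (1-α)^n - γ * (((1-α)*p)^n - (α*(1-p))^n) := by
  have h10 : (fun _ : Fin n => (1:Fin 2)) ≠ (fun _ : Fin n => 0) := (zero_ne_one' hn).symm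
  have hc : (0:ℝ) < (1-p)*(1-α) := mul_pos h.pb0 h.ab0
  -- the three kinds of suprema
  have Sone : (⨆ x, ∑ y, pXYn n p α x y * znChannel n γ y (fun _ => 1))
      = (1-γ) * ((1-α)*p)^n := by
    have hval : ∀ x, (∑ y, pXYn n p α x y * znChannel n γ y (fun _ => 1))
        = pXYn n p α x (fun _ => 1) * (1-γ) := by
      intro x; rw [sum_znChannel]; simp [h10]
    rw [iSup_congr hval]
    rw [iSup_eq_of_le _ (fun _ => 1)]
    · rw [diag_one]; ring
    · intro x
      exact mul_le_mul_of_nonneg_right (pXYn_le_diag h _ _) (by linarith)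
  have Szero : (⨆ x, ∑ y, pXYn n p α x y * znChannel n γ y (fun _ => 0))
      = γ * (α*(1-p))^n + ((1-p)*(1-α))^n := by
    have hval : ∀ x, (∑ y, pXYn n p α x y * znChannel n γ y (fun _ => 0))
        = pXYn n p α x (fun _ => 1) * γ + pXYn n p α x (fun _ => 0) := by
      intro x; rw [sum_znChannel]; simp [h10.symm, zero_ne_one' hn]
    rw [iSup_congr hval]
    rw [iSup_eq_of_le _ (fun _ => 0)]
    · rw [off_zero_one, diag_zero]; ring
    · intro x
      by_cases hx : x = (fun _ : Fin n => (0:Fin 2))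
      · subst hx; exact le_rfl
      · -- multiply through by (1-p)*(1-α)
        have hb1 : pXYn n p α x (fun _ => 1) ≤ ((1-α)*p)^n := pXYn_le_An h x
        have hb0 := off_diag_zero_bound h hn hx
        rw [off_zero_one, diag_zero]
        refine le_of_mul_le_mul_right ?_ hc
        have hγ1 : pXYn n p α x (fun _ => 1) * γ * ((1-p)*(1-α))
            ≤ ((1-α)*p)^n * γ * ((1-p)*(1-α)) := by
          have := mul_le_mul_of_nonneg_right hb1 (mul_nonneg h0 hc.le)
          nlinarith [this]
        nlinarith [hb0, hγ1, hcond]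
  have Srest : ∀ z : Fin n → Fin 2, z ≠ (fun _ => 1) → z ≠ (fun _ => 0) →
      (⨆ x, ∑ y, pXYn n p α x y * znChannel n γ y z) = pXYn n p α z z := by
    intro z hz1 hz0
    have hval : ∀ x, (∑ y, pXYn n p α x y * znChannel n γ y z)
        = pXYn n p α x z := by
      intro x; rw [sum_znChannel]; simp [hz1, hz0]
    rw [iSup_congr hval]
    exact iSup_eq_of_le _ z (fun x => pXYn_le_diag h x z)
  -- assemble
  rw [pcXZn, split_sum hn]
  rw [Finset.sum_congr rfl (fun z hz => Srest z
      (Finset.mem_erase.1 (Finset.mem_erase.1 hz).2).1 (Finset.mem_erase.1 hz).1)]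
  have hdiagsplit := split_sum hn (fun z => pXYn n p α z z)
  rw [sum_diag, diag_one, diag_zero] at hdiagsplit
  rw [Sone, Szero]
  linarith [hdiagsplit]

/-- `P_c(Y^n|Z^n)` for the Z-channel. -/
lemma pcYZn_znChannel (h : Hyp p α) (hn : 1 ≤ n) {γ : ℝ} (h0 : 0 ≤ γ) (h1 : γ ≤ 1)
    (hcond : γ * (α*(1-p)+(1-α)*p)^n ≤ (1 - (α*(1-p)+(1-α)*p))^n) :
    pcYZn n p α (znChannel n γ)
      = 1 - γ * (α*(1-p)+(1-α)*p)^n := by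
  have h10 : (fun _ : Fin n => (1:Fin 2)) ≠ (fun _ : Fin n => 0) := (zero_ne_one' hn).symm
  have Tone : (⨆ y, (∑ x, pXYn n p α x y) * znChannel n γ y (fun _ => 1))
      = (1-γ) * (α*(1-p)+(1-α)*p)^n := by
    rw [iSup_eq_of_le _ (fun _ => 1)]
    · rw [znChannel, if_pos rfl, if_neg h10, if_pos rfl, pY_one]; ring
    · intro y
      by_cases hy : y = (fun _ : Fin n => (1:Fin 2))
      · subst hy; exact le_rfl
      · have : znChannel n γ y (fun _ => 1) = 0 := by
          simp [znChannel, hy, (Ne.symm hy)]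
        rw [this, mul_zero, znChannel, if_pos rfl, if_neg h10, if_pos rfl, pY_one]
        have := pow_nonneg h.q0.le n
        nlinarith
  have Tzero : (⨆ y, (∑ x, pXYn n p α x y) * znChannel n γ y (fun _ => 0))
      = (1 - (α*(1-p)+(1-α)*p))^n := by
    rw [iSup_eq_of_le _ (fun _ => 0)]
    · rw [znChannel, if_neg (zero_ne_one' hn), if_pos rfl, pY_zero]; ring
    · intro y
      have hQz : znChannel n γ (fun _ : Fin n => (0:Fin 2)) (fun _ => 0) = 1 := by
        simp [znChannel, zero_ne_one' hn]
      rw [hQz, mul_one, pY_zero]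
      by_cases hy : y = (fun _ : Fin n => (1:Fin 2))
      · subst hy
        have : znChannel n γ (fun _ : Fin n => (1:Fin 2)) (fun _ => 0) = γ := by
          simp [znChannel, h10]
        rw [this, pY_one]
        linarith [hcond]
      · by_cases hy0 : y = (fun _ : Fin n => (0:Fin 2))
        · subst hy0; rw [hQz, mul_one, pY_zero]
        · have : znChannel n γ y (fun _ => 0) = 0 := by
            simp [znChannel, hy, Ne.symm hy0]
          rw [this, mul_zero]
          exact pow_nonneg (by linarith [h.q1]) n
  have Trest : ∀ z : Fin n → Fin 2, z ≠ (fun _ => 1) → z ≠ (fun _ => 0) →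
      (⨆ y, (∑ x, pXYn n p α x y) * znChannel n γ y z) = ∑ x, pXYn n p α x z := by
    intro z hz1 hz0
    rw [iSup_eq_of_le _ z]
    · have : znChannel n γ z z = 1 := by simp [znChannel, hz1]
      rw [this, mul_one]
    · intro y
      have hQzz : znChannel n γ z z = 1 := by simp [znChannel, hz1]
      rw [hQzz, mul_one]
      by_cases hy : y = (fun _ : Fin n => (1:Fin 2))
      · subst hy
        have : znChannel n γ (fun _ : Fin n => (1:Fin 2)) z = 0 := by
          simp [znChannel, hz1, hz0]
        rw [this, mul_zero]
        exact pY_nonneg h z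
      · by_cases hyz : z = y
        · subst hyz
          have : znChannel n γ z z = 1 := by simp [znChannel, hy]
          rw [this, mul_one]
        · have : znChannel n γ y z = 0 := by simp [znChannel, hy, hyz]
          rw [this, mul_zero]
          exact pY_nonneg h z
  rw [pcYZn, split_sum hn]
  rw [Finset.sum_congr rfl (fun z hz => Trest z
      (Finset.mem_erase.1 (Finset.mem_erase.1 hz).2).1 (Finset.mem_erase.1 hz).1)]
  have hsplit := split_sum hn (fun y => ∑ x, pXYn n p α x y)
  rw [sum_pY, pY_one, pY_zero] at hsplit
  rw [Tone, Tzero]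
  linarith [hsplit]

lemma pcYZn_nonneg (h : Hyp p α) (Q : (Fin n → Fin 2) → (Fin n → Fin 2) → ℝ)
    (hQ : IsChan n Q) : 0 ≤ pcYZn n p α Q := by
  refine Finset.sum_nonneg fun z _ => ?_
  have h1 : (0:ℝ) ≤ (fun y => (∑ x, pXYn n p α x y) * Q y z) (fun _ => 1) :=
    mul_nonneg (pY_nonneg h (fun _ => 1)) (hQ.1 (fun _ => 1) z)
  exact le_trans h1 (le_ciSup (f := fun y => (∑ x, pXYn n p α x y) * Q y z)
    (Set.finite_range _).bddAbove (fun _ => 1))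

end HL

/-- For `X^n` i.i.d. `Bernoulli(p)`, `p ∈ [1/2, 1)`, `Y_k = X_k ⊕ V_k` with `V^n` i.i.d.
`Bernoulli(α)` independent of `X^n`, `α ∈ [0, 1/2)` and `ᾱ > p`: there exists `ε_L` with
`p ≤ ε_L < ᾱ` such that for all `ε ∈ [ε_L, ᾱ]`, `h̲_n(ε)^n = 1 - ζ_n(ε) q^n`, where
`q = α p̄ + ᾱ p` and `ζ_n(ε) = (ᾱ^n - ε^n)/((ᾱ p)^n - (α p̄)^n)`; moreover the `2^n`-ary
Z-channel `Z_n(ζ_n(ε))` achieves this maximum. -/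
theorem hLow_eq (n : ℕ) (hn : 1 ≤ n) (p α : ℝ)
    (hp : p ∈ Set.Ico (1 / 2 : ℝ) 1) (hα : α ∈ Set.Ico (0 : ℝ) (1 / 2))
    (hap : 1 - α > p) :
    ∃ εL : ℝ, p ≤ εL ∧ εL < 1 - α ∧
      ∀ ε ∈ Set.Icc εL (1 - α),
        hLow n p α ε ^ n =
            1 - ((1 - α) ^ n - ε ^ n) / (((1 - α) * p) ^ n - (α * (1 - p)) ^ n)
                  * (α * (1 - p) + (1 - α) * p) ^ n ∧
        IsChan n (znChannel n
            (((1 - α) ^ n - ε ^ n) / (((1 - α) * p) ^ n - (α * (1 - p)) ^ n))) ∧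
        pcXZn n p α (znChannel n
            (((1 - α) ^ n - ε ^ n) / (((1 - α) * p) ^ n - (α * (1 - p)) ^ n))) ≤ ε ^ n ∧
        pcYZn n p α (znChannel n
            (((1 - α) ^ n - ε ^ n) / (((1 - α) * p) ^ n - (α * (1 - p)) ^ n)))
            ^ ((n : ℝ)⁻¹) = hLow n p α ε := by
  obtain ⟨hp1, hp2⟩ := hp
  obtain ⟨ha1, ha2⟩ := hα
  have h : HL.Hyp p α := ⟨hp1, hp2, ha1, ha2, by linarith⟩
  have hn0 : n ≠ 0 := by omega
  have hΔ : 0 < ((1-α)*p)^n - (α*(1-p))^n := HL.Delta_pos h hn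
  have hq0 : (0:ℝ) < α*(1-p)+(1-α)*p := h.q0
  have hq1 : α*(1-p)+(1-α)*p < 1 := h.q1
  have hqn0 : (0:ℝ) < (α*(1-p)+(1-α)*p)^n := pow_pos hq0 n
  have hcpos : (0:ℝ) < (1-p)*(1-α) := mul_pos h.pb0 h.ab0
  have hnum : (0:ℝ) < ((1-p)*(1-α) - p*α) * ((1-p)*(1-α))^n := by
    have : (0:ℝ) < (1-p)*(1-α) - p*α := by nlinarith [h.hap, h.ha0, h.p0]
    exact mul_pos this (pow_pos hcpos n)
  -- the two threshold values
  set γa : ℝ := ((1-p)*(1-α) - p*α) * ((1-p)*(1-α))^n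
      / ((((1-α)*p)^n - (α*(1-p))^n) * ((1-p)*(1-α))) with hγa_def
  set γb : ℝ := (1 - (α*(1-p)+(1-α)*p))^n / (α*(1-p)+(1-α)*p)^n with hγb_def
  have hγa0 : 0 < γa := div_pos hnum (mul_pos hΔ hcpos)
  have hγb0 : 0 < γb := div_pos (pow_pos (by linarith) n) hqn0
  set γ1 : ℝ := min γa (min γb 1) with hγ1_def
  have hγ10 : 0 < γ1 := lt_min hγa0 (lt_min hγb0 one_pos)
  set c : ℝ := max (p^n) ((1-α)^n - γ1 * (((1-α)*p)^n - (α*(1-p))^n)) with hc_def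
  have hc0 : (0:ℝ) < c := lt_max_of_lt_left (pow_pos h.p0 n)
  have hclt : c < (1-α)^n := by
    refine max_lt ?_ ?_
    · exact pow_lt_pow_left₀ hap (le_of_lt h.p0) hn0
    · nlinarith [mul_pos hγ10 hΔ]
  refine ⟨c ^ ((n:ℝ)⁻¹), ?_, ?_, ?_⟩
  · -- p ≤ εL
    have h1 : (p^n : ℝ) ^ ((n:ℝ)⁻¹) = p := Real.pow_rpow_inv_natCast h.p0.le hn0
    calc p = (p^n : ℝ) ^ ((n:ℝ)⁻¹) := h1.symm
      _ ≤ c ^ ((n:ℝ)⁻¹) :=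
        Real.rpow_le_rpow (pow_nonneg h.p0.le n) (le_max_left _ _) (by positivity)
  · -- εL < 1 - α
    have h1 : ((1-α)^n : ℝ) ^ ((n:ℝ)⁻¹) = 1-α := Real.pow_rpow_inv_natCast h.ab0.le hn0
    calc c ^ ((n:ℝ)⁻¹) < ((1-α)^n : ℝ) ^ ((n:ℝ)⁻¹) :=
        Real.rpow_lt_rpow hc0.le hclt (by positivity)
      _ = 1 - α := h1
  · rintro ε ⟨hε1, hε2⟩
    have hεL0 : (0:ℝ) < c ^ ((n:ℝ)⁻¹) := Real.rpow_pos_of_pos hc0 _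
    have hε0 : (0:ℝ) < ε := lt_of_lt_of_le hεL0 hε1
    have hεLn : (c ^ ((n:ℝ)⁻¹)) ^ n = c := Real.rpow_inv_natCast_pow hc0.le hn0
    have hεc : c ≤ ε^n := by
      calc c = (c ^ ((n:ℝ)⁻¹)) ^ n := hεLn.symm
        _ ≤ ε^n := pow_le_pow_left₀ hεL0.le hε1 n
    have hεub : ε^n ≤ (1-α)^n := pow_le_pow_left₀ hε0.le hε2 n
    set ζ : ℝ := ((1 - α) ^ n - ε ^ n) / (((1 - α) * p) ^ n - (α * (1 - p)) ^ n)
      with hζ_def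
    have hζ0 : 0 ≤ ζ := div_nonneg (by linarith) hΔ.le
    have hζγ : ζ ≤ γ1 := by
      rw [hζ_def, div_le_iff₀ hΔ]
      have : (1-α)^n - γ1 * (((1-α)*p)^n - (α*(1-p))^n) ≤ ε^n :=
        le_trans (le_max_right _ _) hεc
      linarith
    have hζ1 : ζ ≤ 1 := le_trans hζγ (le_trans (min_le_right _ _) (min_le_right _ _))
    have hζΔ : ζ * (((1-α)*p)^n - (α*(1-p))^n) = (1-α)^n - ε^n :=
      div_mul_cancel₀ _ hΔ.ne'
    have hcond_a : ζ * (((1-α)*p)^n - (α*(1-p))^n) * ((1-p)*(1-α))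
        ≤ ((1-p)*(1-α) - p*α) * ((1-p)*(1-α))^n := by
      have h1 : ζ ≤ γa := le_trans hζγ (min_le_left _ _)
      rw [hγa_def, le_div_iff₀ (mul_pos hΔ hcpos)] at h1
      linarith [h1]
    have hcond_b : ζ * (α*(1-p)+(1-α)*p)^n ≤ (1 - (α*(1-p)+(1-α)*p))^n := by
      have h1 : ζ ≤ γb := le_trans hζγ (le_trans (min_le_right _ _) (min_le_left _ _))
      rw [hγb_def, le_div_iff₀ hqn0] at h1
      exact h1
    have hchan : IsChan n (znChannel n ζ) := HL.znChannel_isChan hn hζ0 hζ1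
    have hX : pcXZn n p α (znChannel n ζ) = ε ^ n := by
      rw [HL.pcXZn_znChannel h hn hζ0 hζ1 hcond_a, hζΔ]
      ring
    have hY : pcYZn n p α (znChannel n ζ) = 1 - ζ * (α*(1-p)+(1-α)*p)^n :=
      HL.pcYZn_znChannel h hn hζ0 hζ1 hcond_b
    have hT0 : 0 ≤ 1 - ζ * (α*(1-p)+(1-α)*p)^n := by
      have h1 : (1 - (α*(1-p)+(1-α)*p))^n ≤ 1 :=
        pow_le_one₀ (by linarith) (by linarith)
      linarith [hcond_b]
    -- upper bound on the set defining hLow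
    have hub : ∀ u ∈ {u : ℝ | ∃ Q, IsChan n Q ∧ pcXZn n p α Q ≤ ε ^ n ∧
        u = pcYZn n p α Q ^ ((n : ℝ)⁻¹)},
        u ≤ (1 - ζ * (α*(1-p)+(1-α)*p)^n) ^ ((n:ℝ)⁻¹) := by
      rintro u ⟨Q, hQ, hPle, rfl⟩
      have hconv := HL.converse h hn Q hQ
      have hs0 : 0 ≤ (α*(1-p)+(1-α)*p)^n / (((1-α)*p)^n - (α*(1-p))^n) :=
        div_nonneg hqn0.le hΔ.le
      have hmul := mul_le_mul_of_nonneg_left hPle hs0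
      have hid : (1 - (α*(1-p)+(1-α)*p)^n / (((1-α)*p)^n - (α*(1-p))^n) * (1-α)^n)
          + (α*(1-p)+(1-α)*p)^n / (((1-α)*p)^n - (α*(1-p))^n) * ε^n
          = 1 - ζ * (α*(1-p)+(1-α)*p)^n := by
        rw [hζ_def]; ring
      have hle : pcYZn n p α Q ≤ 1 - ζ * (α*(1-p)+(1-α)*p)^n := by
        rw [← hid]; linarith [hconv, hmul]
      exact Real.rpow_le_rpow (HL.pcYZn_nonneg h Q hQ) hle (by positivity)
    have hmem : (1 - ζ * (α*(1-p)+(1-α)*p)^n) ^ ((n:ℝ)⁻¹) ∈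
        {u : ℝ | ∃ Q, IsChan n Q ∧ pcXZn n p α Q ≤ ε ^ n ∧
          u = pcYZn n p α Q ^ ((n : ℝ)⁻¹)} :=
      ⟨znChannel n ζ, hchan, le_of_eq hX, by rw [hY]⟩
    have hhlow : hLow n p α ε = (1 - ζ * (α*(1-p)+(1-α)*p)^n) ^ ((n:ℝ)⁻¹) := by
      rw [hLow]
      exact le_antisymm (csSup_le ⟨_, hmem⟩ hub)
        (le_csSup ⟨_, hub⟩ hmem)
    refine ⟨?_, hchan, le_of_eq hX, ?_⟩
    · rw [hhlow]
      exact Real.rpow_inv_natCast_pow hT0 hn0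
    · rw [hY, hhlow]
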